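/- arXiv:1404.0218 — 7 statements merged into one kernel-verified Lean document; each statement's English description precedes it below -/
import Mathlib

section
/- Let V and W be subsets of finite-dimensional normed spaces and Φ : V → W a linear map. Let δ, ε ∈ (0,1) with ε < δ/7. Suppose for each v ∈ V there exists r = r(v) ∈ V such that (i) there is a finite decomposition v − r = Σᵢ vᵢ with all vᵢ ∈ V and Σᵢ ‖vᵢ‖ ≤ ε‖v‖, and (ii) |‖Φr‖ − ‖r‖| ≤ (δ/2)‖r‖. Then |‖Φv‖ − ‖v‖| ≤ δ‖v‖ for all v ∈ V. -/
set_option maxHeartbeats 1000000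


/-- Generalized approximation lemma (Lemma 1, case ε < δ/7). -/
theorem approximation_lemma
    {E F : Type*} [NormedAddCommGroup E] [NormedSpace ℝ E] [FiniteDimensional ℝ E]
    [NormedAddCommGroup F] [NormedSpace ℝ F] [FiniteDimensional ℝ F]
    (V : Set E) (Φ : E →ₗ[ℝ] F) (δ ε : ℝ)
    (hδ : δ ∈ Set.Ioo (0:ℝ) 1) (hε : ε ∈ Set.Ioo (0:ℝ) 1) (hεδ : ε < δ / 7)
    (happrox : ∀ v ∈ V, ∃ r ∈ V,
      (∃ (k : ℕ) (w : Fin k → E), (∀ i, w i ∈ V) ∧ v - r = ∑ i, w i ∧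
        ∑ i, ‖w i‖ ≤ ε * ‖v‖) ∧
      |‖Φ r‖ - ‖r‖| ≤ δ / 2 * ‖r‖) :
    ∀ v ∈ V, |‖Φ v‖ - ‖v‖| ≤ δ * ‖v‖ := by
  obtain ⟨hδ0, hδ1⟩ := hδ
  obtain ⟨hε0, hε1⟩ := hε
  set Φ' := LinearMap.toContinuousLinearMap Φ with hΦ'
  set S : Set ℝ := {t | ∃ v ∈ V, ‖v‖ ≠ 0 ∧ t = ‖Φ v‖ / ‖v‖} with hS
  have hbdd : BddAbove S := by
    refine ⟨‖Φ'‖, ?_⟩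
    rintro t ⟨v, hv, hv0, rfl⟩
    rw [div_le_iff₀ (lt_of_le_of_ne (norm_nonneg v) (Ne.symm hv0))]
    exact Φ'.le_opNorm v
  set M := sSup S with hM
  have hM0 : 0 ≤ M := Real.sSup_nonneg (by rintro t ⟨v, hv, hv0, rfl⟩; positivity)
  have hMv : ∀ v ∈ V, ‖Φ v‖ ≤ M * ‖v‖ := by
    intro v hv
    by_cases h : ‖v‖ = 0
    · have hv0 : v = 0 := norm_eq_zero.mp h
      simp [hv0]
    · have h1 : ‖Φ v‖ / ‖v‖ ≤ M := le_csSup hbdd ⟨v, hv, h, rfl⟩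
      rwa [div_le_iff₀ (lt_of_le_of_ne (norm_nonneg v) (Ne.symm h))] at h1
  have key : ∀ v ∈ V, (1 - δ/2) * ((1-ε) * ‖v‖) - M * ε * ‖v‖ ≤ ‖Φ v‖ ∧
      ‖Φ v‖ ≤ (1 + δ/2) * ((1+ε) * ‖v‖) + M * ε * ‖v‖ := by
    intro v hv
    obtain ⟨r, hr, ⟨k, w, hwV, hsum, hwn⟩, hΦr⟩ := happrox v hv
    have hvr : ‖v - r‖ ≤ ε * ‖v‖ := by
      rw [hsum]; exact (norm_sum_le _ _).trans hwn
    have hΦvr : ‖Φ (v - r)‖ ≤ M * ε * ‖v‖ := by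
      have heq : Φ (v - r) = ∑ i, Φ (w i) := by rw [hsum, map_sum]
      rw [heq]
      calc ‖∑ i, Φ (w i)‖ ≤ ∑ i, ‖Φ (w i)‖ := norm_sum_le _ _
      _ ≤ ∑ i, M * ‖w i‖ := Finset.sum_le_sum fun i _ => hMv _ (hwV i)
      _ = M * ∑ i, ‖w i‖ := by rw [Finset.mul_sum]
      _ ≤ M * (ε * ‖v‖) := mul_le_mul_of_nonneg_left hwn hM0
      _ = M * ε * ‖v‖ := by ring
    have habs := abs_le.mp (abs_norm_sub_norm_le v r)
    have hr_ub : ‖r‖ ≤ (1+ε)*‖v‖ := by nlinarith [habs.1, hvr]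
    have hr_lb : (1-ε)*‖v‖ ≤ ‖r‖ := by nlinarith [habs.2, hvr]
    have hΦrb := abs_le.mp hΦr
    have e1 : ‖Φ v‖ ≤ ‖Φ r‖ + ‖Φ (v - r)‖ := by
      have hid : Φ v = Φ r + Φ (v - r) := by
        rw [← map_add]; exact congrArg Φ (by abel)
      calc ‖Φ v‖ = ‖Φ r + Φ (v - r)‖ := by rw [hid]
      _ ≤ ‖Φ r‖ + ‖Φ (v - r)‖ := norm_add_le _ _
    have e2 : ‖Φ r‖ ≤ ‖Φ v‖ + ‖Φ (v - r)‖ := by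
      have hid : Φ r = Φ v - Φ (v - r) := by
        rw [← map_sub]; exact congrArg Φ (by abel)
      calc ‖Φ r‖ = ‖Φ v - Φ (v - r)‖ := by rw [hid]
      _ ≤ ‖Φ v‖ + ‖Φ (v - r)‖ := norm_sub_le _ _
    constructor
    · have h3 : (1-δ/2)*((1-ε)*‖v‖) ≤ (1-δ/2)*‖r‖ :=
        mul_le_mul_of_nonneg_left hr_lb (by linarith)
      nlinarith [hΦrb.2, e2, hΦvr]
    · have h3 : (1+δ/2)*‖r‖ ≤ (1+δ/2)*((1+ε)*‖v‖) :=
        mul_le_mul_of_nonneg_left hr_ub (by linarith)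
      nlinarith [hΦrb.1, e1, hΦvr]
  have hMrec : M ≤ (1+δ/2)*(1+ε) + M*ε := by
    apply Real.sSup_le
    · rintro t ⟨v, hv, hv0, rfl⟩
      have hvpos : 0 < ‖v‖ := lt_of_le_of_ne (norm_nonneg v) (Ne.symm hv0)
      rw [div_le_iff₀ hvpos]
      calc ‖Φ v‖ ≤ (1 + δ/2) * ((1+ε) * ‖v‖) + M * ε * ‖v‖ := (key v hv).2
      _ = ((1+δ/2)*(1+ε) + M*ε) * ‖v‖ := by ring
    · nlinarith [mul_nonneg hM0 hε0.le]
  have hM2 : M ≤ 2 := by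
    nlinarith [hMrec, hM0, mul_le_mul_of_nonneg_left (show ε ≤ 1/7 by linarith) hM0,
      mul_nonneg hδ0.le hε0.le]
  intro v hv
  obtain ⟨lb, ub⟩ := key v hv
  have hvn : (0:ℝ) ≤ ‖v‖ := norm_nonneg v
  have hεv : ε * ‖v‖ ≤ δ/7 * ‖v‖ := mul_le_mul_of_nonneg_right hεδ.le hvn
  have hMεv : M * (ε * ‖v‖) ≤ 2 * (ε * ‖v‖) :=
    mul_le_mul_of_nonneg_right hM2 (mul_nonneg hε0.le hvn)
  rw [abs_le]
  constructor
  · nlinarith [lb, hεv, hMεv, mul_nonneg hδ0.le hvn, mul_nonneg (mul_nonneg hδ0.le hδ0.le) hvn]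
  · nlinarith [ub, hεv, hMεv, mul_nonneg hδ0.le hvn, mul_nonneg (mul_nonneg hδ0.le hδ0.le) hvn]
end

section
/- Under the hypotheses of the previous approximation lemma, if additionally ‖r(v)‖ = ‖v‖ for all v ∈ V, then the conclusion |‖Φv‖ − ‖v‖| ≤ δ‖v‖ for all v ∈ V holds already under the weaker condition ε < δ/4. -/
/-- Generalized approximation lemma, norm-preserving approximant case: with
`‖r v‖ = ‖v‖` for all `v ∈ V`, the conclusion holds already for `ε < δ/4`. -/
theorem approximation_lemma_norm_preserving
    {E F : Type*} [NormedAddCommGroup E] [NormedSpace ℝ E] [FiniteDimensional ℝ E]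
    [NormedAddCommGroup F] [NormedSpace ℝ F] [FiniteDimensional ℝ F]
    (V : Set E) (Φ : E →ₗ[ℝ] F) (r : E → E) (δ ε : ℝ)
    (hδ : δ ∈ Set.Ioo (0:ℝ) 1) (hε : ε ∈ Set.Ioo (0:ℝ) 1) (hεδ : ε < δ / 4)
    (hr : ∀ v ∈ V, r v ∈ V)
    (hdec : ∀ v ∈ V, ∃ (k : ℕ) (w : Fin k → E), (∀ i, w i ∈ V) ∧
      v - r v = ∑ i, w i ∧ ∑ i, ‖w i‖ ≤ ε * ‖v‖)
    (hΦr : ∀ v ∈ V, |‖Φ (r v)‖ - ‖r v‖| ≤ δ / 2 * ‖r v‖)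
    (hnorm : ∀ v ∈ V, ‖r v‖ = ‖v‖) :
    ∀ v ∈ V, |‖Φ v‖ - ‖v‖| ≤ δ * ‖v‖ := by
  intro v hv
  by_cases hv0 : v = 0
  · simp [hv0]
  classical
  set L := LinearMap.toContinuousLinearMap Φ with hLdef
  have hLΦ : ∀ x, Φ x = L x := fun x => rfl
  set S : Set ℝ := (fun u => ‖Φ u‖ / ‖u‖) '' (V \ {0}) with hSdef
  have hSne : S.Nonempty := ⟨_, ⟨v, ⟨hv, hv0⟩, rfl⟩⟩
  have hSbdd : BddAbove S := by
    refine ⟨‖L‖, ?_⟩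
    rintro x ⟨u, ⟨hu, hu0⟩, rfl⟩
    have hu0' : (0:ℝ) < ‖u‖ := norm_pos_iff.mpr hu0
    rw [div_le_iff₀ hu0']
    simpa [hLΦ] using L.le_opNorm u
  set C : ℝ := sSup S with hCdef
  have hC0 : 0 ≤ C := by
    have : ‖Φ v‖ / ‖v‖ ∈ S := ⟨v, ⟨hv, hv0⟩, rfl⟩
    have h1 := le_csSup hSbdd this
    have h2 : (0:ℝ) ≤ ‖Φ v‖ / ‖v‖ := by positivity
    linarith
  have hCbound : ∀ u ∈ V, ‖Φ u‖ ≤ C * ‖u‖ := by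
    intro u hu
    by_cases hu0 : u = 0
    · simp [hu0]
    · have hu0' : (0:ℝ) < ‖u‖ := norm_pos_iff.mpr hu0
      have : ‖Φ u‖ / ‖u‖ ≤ C := le_csSup hSbdd ⟨u, ⟨hu, hu0⟩, rfl⟩
      calc ‖Φ u‖ = ‖Φ u‖ / ‖u‖ * ‖u‖ := by field_simp
        _ ≤ C * ‖u‖ := by exact mul_le_mul_of_nonneg_right this hu0'.le
  have hdiff : ∀ u ∈ V, ‖Φ u - Φ (r u)‖ ≤ C * (ε * ‖u‖) := by
    intro u hu
    obtain ⟨k, w, hwV, hsum, hnormsum⟩ := hdec u hu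
    have : Φ u - Φ (r u) = ∑ i, Φ (w i) := by
      rw [← map_sub, hsum, map_sum]
    rw [this]
    calc ‖∑ i, Φ (w i)‖ ≤ ∑ i, ‖Φ (w i)‖ := norm_sum_le _ _
      _ ≤ ∑ i, C * ‖w i‖ := Finset.sum_le_sum fun i _ => hCbound _ (hwV i)
      _ = C * ∑ i, ‖w i‖ := by rw [Finset.mul_sum]
      _ ≤ C * (ε * ‖u‖) := mul_le_mul_of_nonneg_left hnormsum hC0
  have hΦru : ∀ u ∈ V, ‖Φ (r u)‖ ≤ (1 + δ/2) * ‖u‖ := by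
    intro u hu
    have h1 := hΦr u hu
    have h2 := hnorm u hu
    rw [abs_le, h2] at h1
    linarith [h1.2]
  have hkey : C ≤ 1 + δ/2 + C * ε := by
    refine csSup_le hSne ?_
    rintro x ⟨u, ⟨hu, hu0⟩, rfl⟩
    have hu0' : (0:ℝ) < ‖u‖ := norm_pos_iff.mpr hu0
    rw [div_le_iff₀ hu0']
    have h1 : ‖Φ u‖ ≤ ‖Φ (r u)‖ + ‖Φ u - Φ (r u)‖ := by
      have := norm_add_le (Φ (r u)) (Φ u - Φ (r u))
      simpa using this
    have h2 := hΦru u hu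
    have h3 := hdiff u hu
    nlinarith
  have hC2 : C ≤ 2 := by nlinarith [hδ.1, hδ.2, hε.1, hε.2]
  -- final estimate
  have hv0' : (0:ℝ) < ‖v‖ := norm_pos_iff.mpr hv0
  have h1 : |‖Φ v‖ - ‖v‖| ≤ |‖Φ v‖ - ‖Φ (r v)‖| + |‖Φ (r v)‖ - ‖v‖| := by
    have := abs_sub_abs_le_abs_sub (‖Φ v‖ - ‖v‖) 0
    calc |‖Φ v‖ - ‖v‖| = |(‖Φ v‖ - ‖Φ (r v)‖) + (‖Φ (r v)‖ - ‖v‖)| := by ring_nf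
      _ ≤ _ := abs_add_le _ _
  have h2 : |‖Φ v‖ - ‖Φ (r v)‖| ≤ ‖Φ v - Φ (r v)‖ := abs_norm_sub_norm_le _ _
  have h3 : |‖Φ (r v)‖ - ‖v‖| ≤ δ/2 * ‖v‖ := by
    have := hΦr v hv
    rw [hnorm v hv] at this
    exact this
  have h4 := hdiff v hv
  nlinarith [h1, h2, h3, h4,
    mul_nonneg (mul_nonneg (sub_nonneg.mpr hC2) hε.1.le) hv0'.le,
    mul_nonneg (sub_nonneg.mpr hεδ.le) hv0'.le]
end

section
/- Let u and ρ be matrices each of rank at most 2κ. Then the difference u − ρ (which has rank at most 4κ) admits a decomposition u − ρ = u₁ + u₂ where u₁ and u₂ each have rank at most 2κ and are orthogonal with respect to the Hilbert–Schmidt (Frobenius) inner product; consequently ‖u₁‖_F + ‖u₂‖_F ≤ √2 · ‖u − ρ‖_F. -/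
open scoped ComplexConjugate

open scoped Matrix

/-!
Let `P` be the orthogonal projection onto the column space of `u`, and split
`u - ρ = P (u - ρ) + (1 - P) (u - ρ)`. The first piece factors through `P`, so its rank is at most
`rank u`; since `(1 - P) u = 0`, the second piece is `(P - 1) ρ`, of rank at most `rank ρ`.
As `P` is self-adjoint and idempotent, `(P a)ᴴ ((1 - P) b) = 0`, so the two pieces are orthogonal;
Pythagoras and `a + b ≤ √2 √(a² + b²)` then give the norm bound.
-/

/-- Frobenius norm of a complex matrix. -/
noncomputable def frobNorm {n : ℕ} (A : Matrix (Fin n) (Fin n) ℂ) : ℝ :=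
  Real.sqrt (∑ i, ∑ j, ‖A i j‖ ^ 2)

theorem Real.add_le_sqrt_two_mul_sqrt_sq_add_sq (a b : ℝ) : a + b ≤ √2 * √(a ^ 2 + b ^ 2) := by
  rw [← Real.sqrt_mul zero_le_two]
  apply Real.le_sqrt_of_sq_le
  nlinarith [sq_nonneg (a - b)]

theorem IsStarProjection.star_mul_mul_one_sub_mul {R : Type*} [Ring R] [StarRing R] {p : R}
    (hp : IsStarProjection p) (a b : R) : star (p * a) * ((1 - p) * b) = 0 := by
  rw [star_mul, hp.isSelfAdjoint.star_eq, mul_assoc, ← mul_assoc p, mul_sub, mul_one,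
    hp.isIdempotentElem.eq, sub_self, zero_mul, mul_zero]

namespace Matrix

variable {m n 𝕜 : Type*}

theorem rank_add_le {K : Type*} [Field K] [Fintype n] (A B : Matrix m n K) :
    (A + B).rank ≤ A.rank + B.rank := by
  have hle : LinearMap.range (A + B).mulVecLin ≤
      LinearMap.range A.mulVecLin ⊔ LinearMap.range B.mulVecLin := by
    rintro x ⟨y, rfl⟩
    rw [mulVecLin_add]
    exact Submodule.add_mem_sup ⟨y, rfl⟩ ⟨y, rfl⟩
  exact (Submodule.finrank_mono hle).trans (Submodule.finrank_add_le_finrank_add_finrank _ _)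

variable [RCLike 𝕜] [Fintype m] [Fintype n] [DecidableEq n]

theorem rank_eq_finrank_range_toEuclideanLin (A : Matrix m n 𝕜) :
    A.rank = Module.finrank 𝕜 (LinearMap.range (toEuclideanLin A)) :=
  rank_eq_finrank_range_toLin A (PiLp.basisFun 2 𝕜 m) (PiLp.basisFun 2 𝕜 n)

variable [DecidableEq m]

theorem exists_isStarProjection_mul_eq_self_rank_eq (u : Matrix m n 𝕜) :
    ∃ P : Matrix m m 𝕜, IsStarProjection P ∧ P * u = u ∧ P.rank = u.rank := by
  set K := LinearMap.range (toEuclideanLin u)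
  let e : Matrix m m 𝕜 ≃⋆ₐ[𝕜] _ := toEuclideanCLM
  set P := e.symm K.starProjection
  have hP : toEuclideanLin P = K.starProjection := by
    rw [← coe_toEuclideanCLM_eq_toEuclideanLin]
    exact congrArg _ (e.apply_symm_apply K.starProjection)
  refine ⟨P, isStarProjection_starProjection.map e.symm, ?_, ?_⟩
  · apply toEuclideanLin.injective
    ext x : 1
    rw [toLpLin_mul (q := 2), LinearMap.comp_apply, hP]
    exact K.starProjection_eq_self_iff.mpr ⟨x, rfl⟩
  · rw [rank_eq_finrank_range_toEuclideanLin, rank_eq_finrank_range_toEuclideanLin, hP]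
    exact congrArg (fun S : Submodule 𝕜 _ => Module.finrank 𝕜 S) K.range_starProjection

end Matrix

theorem frobNorm_nonneg {n : ℕ} (A : Matrix (Fin n) (Fin n) ℂ) : 0 ≤ frobNorm A :=
  Real.sqrt_nonneg _

theorem frobNorm_sq_eq_trace {n : ℕ} (A : Matrix (Fin n) (Fin n) ℂ) :
    (frobNorm A : ℂ) ^ 2 = (Aᴴ * A).trace := by
  rw [← Complex.ofReal_pow, frobNorm, Real.sq_sqrt (by positivity), Matrix.trace, Finset.sum_comm]
  push_cast
  refine Finset.sum_congr rfl fun j _ => Finset.sum_congr rfl fun i _ => ?_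
  exact (RCLike.conj_mul (A i j)).symm

theorem frobNorm_add_sq_of_conjTranspose_mul_eq_zero {n : ℕ} {A B : Matrix (Fin n) (Fin n) ℂ}
    (h : Aᴴ * B = 0) : frobNorm (A + B) ^ 2 = frobNorm A ^ 2 + frobNorm B ^ 2 := by
  have h' : Bᴴ * A = 0 := by
    rw [← Matrix.conjTranspose_conjTranspose A, ← Matrix.conjTranspose_mul, h,
      Matrix.conjTranspose_zero]
  apply Complex.ofReal_injective
  push_cast
  simp only [frobNorm_sq_eq_trace, Matrix.conjTranspose_add, Matrix.add_mul, Matrix.mul_add, h, h',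
    Matrix.trace_add, add_zero, zero_add]

/-- Differences of rank-`2κ` matrices admit an orthogonal 2-term decomposition
into rank-`2κ` matrices, with the `σ = √2` bound on the sum of Frobenius norms. -/
theorem lowrank_orthogonal_decomposition
    {n : ℕ} (κ : ℕ) (u ρ : Matrix (Fin n) (Fin n) ℂ)
    (hu : u.rank ≤ 2 * κ) (hρ : ρ.rank ≤ 2 * κ) :
    (u - ρ).rank ≤ 4 * κ ∧
    ∃ u₁ u₂ : Matrix (Fin n) (Fin n) ℂ,
      u - ρ = u₁ + u₂ ∧ u₁.rank ≤ 2 * κ ∧ u₂.rank ≤ 2 * κ ∧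
      Matrix.trace (u₁.conjTranspose * u₂) = 0 ∧
      frobNorm u₁ + frobNorm u₂ ≤ Real.sqrt 2 * frobNorm (u - ρ) := by
  obtain ⟨P, hP, hPu, hPrank⟩ := Matrix.exists_isStarProjection_mul_eq_self_rank_eq u
  have hsum : u - ρ = P * (u - ρ) + (1 - P) * (u - ρ) := by rw [← add_mul, add_sub_cancel, one_mul]
  have hu₂ : (1 - P) * (u - ρ) = (P - 1) * ρ := by
    rw [mul_sub, sub_mul 1 P u, one_mul, hPu, sub_self, zero_sub, ← neg_mul, neg_sub]
  have hrank₁ : (P * (u - ρ)).rank ≤ 2 * κ := (Matrix.rank_mul_le_left _ _).trans (hPrank ▸ hu)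
  have hrank₂ : ((1 - P) * (u - ρ)).rank ≤ 2 * κ := hu₂ ▸ (Matrix.rank_mul_le_right _ _).trans hρ
  have horth : (P * (u - ρ))ᴴ * ((1 - P) * (u - ρ)) = 0 := hP.star_mul_mul_one_sub_mul _ _
  refine ⟨?_, _, _, hsum, hrank₁, hrank₂, by rw [horth, Matrix.trace_zero], ?_⟩
  · rw [hsum]
    exact (Matrix.rank_add_le _ _).trans (by omega)
  · calc _ ≤ √2 * √(frobNorm (P * (u - ρ)) ^ 2 + frobNorm ((1 - P) * (u - ρ)) ^ 2) :=
          Real.add_le_sqrt_two_mul_sqrt_sq_add_sq _ _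
      _ = √2 * frobNorm (u - ρ) := by
          rw [← frobNorm_add_sq_of_conjTranspose_mul_eq_zero horth, ← hsum,
            Real.sqrt_sq (frobNorm_nonneg _)]
end

section
/- For all s-sparse x and f-sparse y in ℓ²(ℤ), the convolution satisfies ‖x ∗ y‖₂ ≤ √(min{s,f}) · ‖x‖₂ · ‖y‖₂, i.e., β(s,f)² = min{s,f} is a valid upper bound constant. -/
open Pointwise


/-- ℓ² norm of a sequence on ℤ. -/
noncomputable def l2norm (f : ℤ → ℂ) : ℝ := Real.sqrt (∑' k : ℤ, ‖f k‖ ^ 2)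

/-- Convolution on ℤ. -/
noncomputable def conv (x y : ℤ → ℂ) : ℤ → ℂ := fun k => ∑' i : ℤ, x i * y (k - i)

/-- `x` has at most `s` nonzero entries. -/
def Sparse (s : ℕ) (x : ℤ → ℂ) : Prop :=
  ∃ S : Finset ℤ, S.card ≤ s ∧ ∀ i ∉ S, x i = 0

lemma conv_comm' (x y : ℤ → ℂ) : conv x y = conv y x := by
  funext k
  show ∑' i : ℤ, x i * y (k - i) = ∑' i : ℤ, y i * x (k - i)
  calc ∑' i : ℤ, x i * y (k - i)
      = ∑' j : ℤ, x (k - j) * y (k - (k - j)) :=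
        ((Equiv.subLeft k).tsum_eq (fun i => x i * y (k - i))).symm
    _ = ∑' j : ℤ, y j * x (k - j) := by
        simp [sub_sub_cancel, mul_comm]

lemma key_bound (x y : ℤ → ℂ) (S T : Finset ℤ)
    (hx : ∀ i ∉ S, x i = 0) (hy : ∀ i ∉ T, y i = 0) :
    ∑' k : ℤ, ‖conv x y k‖ ^ 2 ≤
      (S.card : ℝ) * (∑' i : ℤ, ‖x i‖ ^ 2) * (∑' i : ℤ, ‖y i‖ ^ 2) := by
  have hxs : ∑' i : ℤ, ‖x i‖ ^ 2 = ∑ i ∈ S, ‖x i‖ ^ 2 :=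
    tsum_eq_sum (fun i hi => by rw [hx i hi]; simp)
  have hys : ∑' i : ℤ, ‖y i‖ ^ 2 = ∑ i ∈ T, ‖y i‖ ^ 2 :=
    tsum_eq_sum (fun i hi => by rw [hy i hi]; simp)
  have hconv : ∀ k : ℤ, conv x y k = ∑ i ∈ S, x i * y (k - i) := fun k =>
    tsum_eq_sum (fun i hi => by rw [hx i hi, zero_mul])
  have hsupp : ∀ k ∉ S + T, conv x y k = 0 := by
    intro k hk
    rw [hconv]
    refine Finset.sum_eq_zero fun i hi => ?_
    have hkt : k - i ∉ T := by
      intro ht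
      exact hk (by simpa using Finset.add_mem_add hi ht)
    rw [hy _ hkt, mul_zero]
  have htsum : ∑' k : ℤ, ‖conv x y k‖ ^ 2 = ∑ k ∈ S + T, ‖conv x y k‖ ^ 2 :=
    tsum_eq_sum (fun k hk => by rw [hsupp k hk]; simp)
  rw [htsum, hxs, hys]
  have step1 : ∀ k : ℤ, ‖conv x y k‖ ^ 2 ≤
      (∑ i ∈ S, ‖x i‖ ^ 2) * (∑ i ∈ S, ‖y (k - i)‖ ^ 2) := by
    intro k
    rw [hconv]
    have h1 : ‖∑ i ∈ S, x i * y (k - i)‖ ≤ ∑ i ∈ S, ‖x i‖ * ‖y (k - i)‖ :=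
      (norm_sum_le _ _).trans (le_of_eq (by simp [norm_mul]))
    calc ‖∑ i ∈ S, x i * y (k - i)‖ ^ 2
        ≤ (∑ i ∈ S, ‖x i‖ * ‖y (k - i)‖) ^ 2 := by
          apply pow_le_pow_left₀ (norm_nonneg _) h1
      _ ≤ (∑ i ∈ S, ‖x i‖ ^ 2) * (∑ i ∈ S, ‖y (k - i)‖ ^ 2) :=
          Finset.sum_mul_sq_le_sq_mul_sq S _ _
  have inner_bound : ∀ i : ℤ, ∑ k ∈ S + T, ‖y (k - i)‖ ^ 2 ≤ ∑ t ∈ T, ‖y t‖ ^ 2 := by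
    intro i
    have hinj : Function.Injective (fun k : ℤ => k - i) := fun a b h => by
      simpa using sub_left_injective h
    have h1 := Finset.sum_image (s := S + T) (g := fun k => k - i)
      (f := fun t => ‖y t‖ ^ 2) (fun a _ b _ h => hinj h)
    rw [← h1]
    set V := (S + T).image (fun k => k - i) with hV
    have h2 : ∑ t ∈ V, ‖y t‖ ^ 2 = ∑ t ∈ V ∩ T, ‖y t‖ ^ 2 := by
      refine (Finset.sum_subset Finset.inter_subset_left fun t ht hnt => ?_).symm
      have : t ∉ T := fun h => hnt (Finset.mem_inter.2 ⟨ht, h⟩)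
      rw [hy t this]; simp
    rw [h2]
    exact Finset.sum_le_sum_of_subset_of_nonneg Finset.inter_subset_right
      (fun t _ _ => by positivity)
  calc ∑ k ∈ S + T, ‖conv x y k‖ ^ 2
      ≤ ∑ k ∈ S + T, (∑ i ∈ S, ‖x i‖ ^ 2) * (∑ i ∈ S, ‖y (k - i)‖ ^ 2) :=
        Finset.sum_le_sum fun k _ => step1 k
    _ = (∑ i ∈ S, ‖x i‖ ^ 2) * ∑ i ∈ S, ∑ k ∈ S + T, ‖y (k - i)‖ ^ 2 := by
        rw [← Finset.mul_sum, Finset.sum_comm]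
    _ ≤ (∑ i ∈ S, ‖x i‖ ^ 2) * ∑ i ∈ S, ∑ t ∈ T, ‖y t‖ ^ 2 :=
        mul_le_mul_of_nonneg_left
          (Finset.sum_le_sum fun i _ => inner_bound i) (by positivity)
    _ = (S.card : ℝ) * (∑ i ∈ S, ‖x i‖ ^ 2) * (∑ t ∈ T, ‖y t‖ ^ 2) := by
        rw [Finset.sum_const, nsmul_eq_mul]; ring

/-- Upper RNMP bound for sparse convolutions: `β(s,f)² = min{s,f}`. -/
theorem sparse_conv_upper_bound
    (s f : ℕ) (x y : ℤ → ℂ) (hx : Sparse s x) (hy : Sparse f y) :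
    l2norm (conv x y) ≤ Real.sqrt (min s f) * l2norm x * l2norm y := by
  obtain ⟨S, hScard, hxS⟩ := hx
  obtain ⟨T, hTcard, hyT⟩ := hy
  have hA : (0:ℝ) ≤ ∑' i : ℤ, ‖x i‖ ^ 2 := tsum_nonneg fun i => by positivity
  have hB : (0:ℝ) ≤ ∑' i : ℤ, ‖y i‖ ^ 2 := tsum_nonneg fun i => by positivity
  have hbound : ∑' k : ℤ, ‖conv x y k‖ ^ 2 ≤
      ((min s f : ℕ) : ℝ) * (∑' i : ℤ, ‖x i‖ ^ 2) * (∑' i : ℤ, ‖y i‖ ^ 2) := by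
    rcases le_total s f with h | h
    · rw [min_eq_left h]
      refine (key_bound x y S T hxS hyT).trans ?_
      gcongr
    · rw [min_eq_right h, conv_comm']
      refine (key_bound y x T S hyT hxS).trans ?_
      rw [mul_right_comm]
      gcongr
  have h2 : l2norm (conv x y) ≤
      Real.sqrt (((min s f : ℕ) : ℝ) * (∑' i : ℤ, ‖x i‖ ^ 2) * (∑' i : ℤ, ‖y i‖ ^ 2)) :=
    Real.sqrt_le_sqrt hbound
  refine h2.trans (le_of_eq ?_)
  rw [Real.sqrt_mul (by positivity), Real.sqrt_mul (by positivity)]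
  rw [l2norm, l2norm]
  push_cast
  ring
end

section
/- For every pair of sparsity levels s, f ∈ ℕ there exists a constant α(s,f) > 0, depending only on s and f (and not on the support locations or the ambient dimension), such that for all x ∈ Σ_s(ℤ) and y ∈ Σ_f(ℤ): α(s,f)·‖x‖₂·‖y‖₂ ≤ ‖x ∗ y‖₂. -/
open Filter Finset Metric
open scoped Pointwise Topology



lemma l2norm_nonneg (g : ℤ → ℂ) : 0 ≤ l2norm g := Real.sqrt_nonneg _

lemma sq_l2norm_eq_sum {g : ℤ → ℂ} {S : Finset ℤ} (hS : ∀ i ∉ S, g i = 0) :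
    l2norm g ^ 2 = ∑ i ∈ S, ‖g i‖ ^ 2 := by
  have h0 : ∑' k : ℤ, ‖g k‖ ^ 2 = ∑ i ∈ S, ‖g i‖ ^ 2 :=
    tsum_eq_sum (fun b hb => by rw [hS b hb]; simp)
  rw [l2norm, Real.sq_sqrt (tsum_nonneg (fun i => by positivity)), h0]

lemma norm_le_l2norm {g : ℤ → ℂ} {S : Finset ℤ} (hS : ∀ i ∉ S, g i = 0) (k : ℤ) :
    ‖g k‖ ≤ l2norm g := by
  have h1 : ‖g k‖ ^ 2 ≤ l2norm g ^ 2 := by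
    rw [sq_l2norm_eq_sum hS]
    by_cases hk : k ∈ S
    · exact Finset.single_le_sum (f := fun i => ‖g i‖ ^ 2) (fun i _ => by positivity) hk
    · rw [hS k hk]
      simpa using Finset.sum_nonneg (fun i (_ : i ∈ S) => by positivity : ∀ i ∈ S, (0:ℝ) ≤ ‖g i‖ ^ 2)
  have h2 := Real.sqrt_le_sqrt h1
  rwa [Real.sqrt_sq (norm_nonneg _), Real.sqrt_sq (l2norm_nonneg _)] at h2

lemma conv_eq_sum {x y : ℤ → ℂ} {S : Finset ℤ} (hS : ∀ i ∉ S, x i = 0) (k : ℤ) :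
    conv x y k = ∑ i ∈ S, x i * y (k - i) :=
  tsum_eq_sum (fun b hb => by rw [hS b hb, zero_mul])

lemma conv_eq_zero {x y : ℤ → ℂ} {S T : Finset ℤ} (hS : ∀ i ∉ S, x i = 0)
    (hT : ∀ i ∉ T, y i = 0) {k : ℤ} (hk : k ∉ S + T) : conv x y k = 0 := by
  rw [conv_eq_sum hS]
  apply Finset.sum_eq_zero
  intro i hi
  have h2 : k - i ∉ T := by
    intro h
    exact hk (by simpa using Finset.add_mem_add hi h)
  rw [hT _ h2, mul_zero]

lemma eval_eq_sum_fin {y : ℤ → ℂ} {T : Finset ℤ} {f : ℕ} (hcard : T.card = f)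
    (hT : ∀ i ∉ T, y i = 0) (q : ℤ) :
    y q = ∑ j : Fin f, if (T.orderEmbOfFin hcard j : ℤ) = q then y (T.orderEmbOfFin hcard j) else 0 := by
  by_cases hq : q ∈ T
  · have hrange : q ∈ Set.range (T.orderEmbOfFin hcard) := by
      rw [Finset.range_orderEmbOfFin]; exact_mod_cast hq
    obtain ⟨j₀, hj₀⟩ := hrange
    rw [Finset.sum_eq_single j₀]
    · rw [if_pos hj₀, hj₀]
    · intro j _ hne
      rw [if_neg]
      intro h
      exact hne ((T.orderEmbOfFin hcard).injective (h.trans hj₀.symm))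
    · intro h; exact absurd (Finset.mem_univ j₀) h
  · rw [hT q hq]
    symm
    apply Finset.sum_eq_zero
    intro j _
    rw [if_neg]
    intro h
    exact hq (h ▸ Finset.orderEmbOfFin_mem T hcard j)

lemma sum_eq_sum_fin {M : Type*} [AddCommMonoid M] {S : Finset ℤ} {s : ℕ} (hcard : S.card = s) (F : ℤ → M) :
    ∑ i ∈ S, F i = ∑ i : Fin s, F (S.orderEmbOfFin hcard i) := by
  rw [Finset.sum_bij (fun (i : Fin s) (_ : i ∈ Finset.univ) => S.orderEmbOfFin hcard i)]
  · intro i _; exact Finset.orderEmbOfFin_mem S hcard i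
  · intro i _ j _ h; exact (S.orderEmbOfFin hcard).injective h
  · intro b hb
    have : b ∈ Set.range (S.orderEmbOfFin hcard) := by rw [Finset.range_orderEmbOfFin]; exact_mod_cast hb
    obtain ⟨i, hi⟩ := this
    exact ⟨i, Finset.mem_univ i, hi⟩
  · intro i _; rfl

lemma conv_double_sum {x y : ℤ → ℂ} {S T : Finset ℤ} {s f : ℕ}
    (hcS : S.card = s) (hcT : T.card = f)
    (hS : ∀ i ∉ S, x i = 0) (hT : ∀ i ∉ T, y i = 0) (k : ℤ) :
    conv x y k = ∑ ij : Fin s × Fin f,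
      if (S.orderEmbOfFin hcS ij.1 : ℤ) + (T.orderEmbOfFin hcT ij.2 : ℤ) = k
      then x (S.orderEmbOfFin hcS ij.1) * y (T.orderEmbOfFin hcT ij.2) else 0 := by
  rw [conv_eq_sum hS, sum_eq_sum_fin hcS]
  rw [show (Finset.univ : Finset (Fin s × Fin f)) = Finset.univ ×ˢ Finset.univ from
    (Finset.univ_product_univ).symm, Finset.sum_product]
  apply Finset.sum_congr rfl
  intro i _
  rw [eval_eq_sum_fin hcT hT (k - S.orderEmbOfFin hcS i), Finset.mul_sum]
  apply Finset.sum_congr rfl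
  intro j _
  rw [mul_ite, mul_zero]
  have hiff : ((T.orderEmbOfFin hcT) j = k - (S.orderEmbOfFin hcS) i) ↔
      ((S.orderEmbOfFin hcS) i + (T.orderEmbOfFin hcT) j = k) := by omega
  exact if_congr hiff rfl rfl

/-- RNMP for sparse convolutions (Theorem 2, lower bound): for each `s, f` there
is `α(s,f) > 0`, independent of support locations and ambient dimension, with
`α‖x‖₂‖y‖₂ ≤ ‖x ∗ y‖₂` for all `s`-sparse `x` and `f`-sparse `y`. -/
theorem sparse_conv_rnmp (s f : ℕ) :
    ∃ α : ℝ, 0 < α ∧ ∀ x y : ℤ → ℂ, Sparse s x → Sparse f y →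
      α * l2norm x * l2norm y ≤ l2norm (conv x y) := by
  classical
  by_contra hcon
  push_neg at hcon
  have h : ∀ n : ℕ, ∃ x y : ℤ → ℂ, Sparse s x ∧ Sparse f y ∧
      l2norm (conv x y) < (1 / (n + 1)) * l2norm x * l2norm y := fun n =>
    hcon (1 / (n + 1)) (by positivity)
  choose x y hx hy hlt using h
  choose S hScard hSz using hx
  choose T hTcard hTz using hy
  choose S' hSsub hcS using fun n => Infinite.exists_superset_card_eq (S n) s (hScard n)
  choose T' hTsub hcT using fun n => Infinite.exists_superset_card_eq (T n) f (hTcard n)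
  have hSz' : ∀ n, ∀ i ∉ S' n, x n i = 0 := fun n i hi => hSz n i (fun h => hi (hSsub n h))
  have hTz' : ∀ n, ∀ i ∉ T' n, y n i = 0 := fun n i hi => hTz n i (fun h => hi (hTsub n h))
  set σ : ∀ n : ℕ, Fin s → ℤ := fun n i => (S' n).orderEmbOfFin (hcS n) i with hσdef
  set τ : ∀ n : ℕ, Fin f → ℤ := fun n j => (T' n).orderEmbOfFin (hcT n) j with hτdef
  have hσmono : ∀ n, StrictMono (σ n) := fun n => ((S' n).orderEmbOfFin (hcS n)).strictMono
  have hτmono : ∀ n, StrictMono (τ n) := fun n => ((T' n).orderEmbOfFin (hcT n)).strictMono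
  -- positivity of norms
  have hXY : ∀ n, 0 < l2norm (x n) * l2norm (y n) := by
    intro n
    rcases (mul_nonneg (l2norm_nonneg (x n)) (l2norm_nonneg (y n))).lt_or_eq with h | h
    · exact h
    · exfalso
      have h2 := hlt n
      rw [mul_assoc, ← h, mul_zero] at h2
      exact absurd h2 (not_lt.mpr (l2norm_nonneg _))
  have hXpos : ∀ n, 0 < l2norm (x n) := by
    intro n
    rcases (l2norm_nonneg (x n)).lt_or_eq with h | h
    · exact h
    · exfalso; have h2 := hXY n; rw [← h, zero_mul] at h2; exact lt_irrefl 0 h2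
  have hYpos : ∀ n, 0 < l2norm (y n) := by
    intro n
    rcases (l2norm_nonneg (y n)).lt_or_eq with h | h
    · exact h
    · exfalso; have h2 := hXY n; rw [← h, mul_zero] at h2; exact lt_irrefl 0 h2
  -- normalized coefficients
  set a : ℕ → Fin s → ℂ := fun n i => x n (σ n i) / (l2norm (x n) : ℂ) with hadef
  set b : ℕ → Fin f → ℂ := fun n j => y n (τ n j) / (l2norm (y n) : ℂ) with hbdef
  have hsumsqx : ∀ n, ∑ i : Fin s, ‖x n (σ n i)‖ ^ 2 = l2norm (x n) ^ 2 := fun n =>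
    ((sq_l2norm_eq_sum (hSz' n)).trans (sum_eq_sum_fin (hcS n) (fun i => ‖x n i‖ ^ 2))).symm
  have hsumsqy : ∀ n, ∑ j : Fin f, ‖y n (τ n j)‖ ^ 2 = l2norm (y n) ^ 2 := fun n =>
    ((sq_l2norm_eq_sum (hTz' n)).trans (sum_eq_sum_fin (hcT n) (fun i => ‖y n i‖ ^ 2))).symm
  have hsuma : ∀ n, ∑ i : Fin s, ‖a n i‖ ^ 2 = 1 := by
    intro n
    have : ∀ i : Fin s, ‖a n i‖ ^ 2 = ‖x n (σ n i)‖ ^ 2 / l2norm (x n) ^ 2 := by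
      intro i
      rw [hadef]
      rw [norm_div, Complex.norm_real, Real.norm_of_nonneg (l2norm_nonneg _), div_pow]
    simp_rw [this]
    rw [← Finset.sum_div, hsumsqx n, div_self (pow_ne_zero 2 (ne_of_gt (hXpos n)))]
  have hsumb : ∀ n, ∑ j : Fin f, ‖b n j‖ ^ 2 = 1 := by
    intro n
    have : ∀ j : Fin f, ‖b n j‖ ^ 2 = ‖y n (τ n j)‖ ^ 2 / l2norm (y n) ^ 2 := by
      intro j
      rw [hbdef]
      rw [norm_div, Complex.norm_real, Real.norm_of_nonneg (l2norm_nonneg _), div_pow]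
    simp_rw [this]
    rw [← Finset.sum_div, hsumsqy n, div_self (pow_ne_zero 2 (ne_of_gt (hYpos n)))]
  have ha1 : ∀ n i, ‖a n i‖ ≤ 1 := by
    intro n i
    rw [hadef, norm_div, Complex.norm_real, Real.norm_of_nonneg (l2norm_nonneg _),
      div_le_one (hXpos n)]
    exact norm_le_l2norm (hSz' n) _
  have hb1 : ∀ n j, ‖b n j‖ ≤ 1 := by
    intro n j
    rw [hbdef, norm_div, Complex.norm_real, Real.norm_of_nonneg (l2norm_nonneg _),
      div_le_one (hYpos n)]
    exact norm_le_l2norm (hTz' n) _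
  -- ultrafilter
  obtain ⟨U, hU⟩ := Ultrafilter.exists_le (atTop : Filter ℕ)
  have limex : ∀ u : ℕ → ℂ, (∀ n, ‖u n‖ ≤ 1) → ∃ z : ℂ, Tendsto u (↑U) (𝓝 z) := by
    intro u hu
    have hc : IsCompact (Metric.closedBall (0 : ℂ) 1) := isCompact_closedBall _ _
    have hle : ↑(U.map u) ≤ Filter.principal (Metric.closedBall (0 : ℂ) 1) := by
      rw [Ultrafilter.coe_map, Filter.le_principal_iff, Filter.mem_map]
      exact Filter.univ_mem' (fun n => Metric.mem_closedBall.mpr (by rw [dist_zero_right]; exact hu n))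
    obtain ⟨z, _, hz⟩ := hc.ultrafilter_le_nhds (U.map u) hle
    exact ⟨z, hz⟩
  choose A hA using fun i => limex (fun n => a n i) (fun n => ha1 n i)
  choose B hB using fun j => limex (fun n => b n j) (fun n => hb1 n j)
  -- limits of sums of squares
  have hsumA : ∑ i : Fin s, ‖A i‖ ^ 2 = 1 := by
    have h1 : Tendsto (fun n => ∑ i : Fin s, ‖a n i‖ ^ 2) ↑U (𝓝 (∑ i : Fin s, ‖A i‖ ^ 2)) :=
      tendsto_finset_sum _ (fun i _ => ((hA i).norm).pow 2)
    have h2 : Tendsto (fun n => ∑ i : Fin s, ‖a n i‖ ^ 2) ↑U (𝓝 1) := by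
      simp_rw [hsuma]; exact tendsto_const_nhds
    exact tendsto_nhds_unique h1 h2
  have hsumB : ∑ j : Fin f, ‖B j‖ ^ 2 = 1 := by
    have h1 : Tendsto (fun n => ∑ j : Fin f, ‖b n j‖ ^ 2) ↑U (𝓝 (∑ j : Fin f, ‖B j‖ ^ 2)) :=
      tendsto_finset_sum _ (fun j _ => ((hB j).norm).pow 2)
    have h2 : Tendsto (fun n => ∑ j : Fin f, ‖b n j‖ ^ 2) ↑U (𝓝 1) := by
      simp_rw [hsumb]; exact tendsto_const_nhds
    exact tendsto_nhds_unique h1 h2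
  -- maximal nonzero indices
  have hAex : (Finset.univ.filter (fun i => A i ≠ 0)).Nonempty := by
    by_contra hA0
    rw [Finset.not_nonempty_iff_eq_empty, Finset.filter_eq_empty_iff] at hA0
    have : ∑ i : Fin s, ‖A i‖ ^ 2 = 0 := Finset.sum_eq_zero (fun i hi => by
      rw [not_not.mp (hA0 hi), norm_zero]; ring)
    rw [hsumA] at this; exact one_ne_zero this
  have hBex : (Finset.univ.filter (fun j => B j ≠ 0)).Nonempty := by
    by_contra hB0
    rw [Finset.not_nonempty_iff_eq_empty, Finset.filter_eq_empty_iff] at hB0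
    have : ∑ j : Fin f, ‖B j‖ ^ 2 = 0 := Finset.sum_eq_zero (fun j hj => by
      rw [not_not.mp (hB0 hj), norm_zero]; ring)
    rw [hsumB] at this; exact one_ne_zero this
  set istar := (Finset.univ.filter (fun i => A i ≠ 0)).max' hAex with histar
  set jstar := (Finset.univ.filter (fun j => B j ≠ 0)).max' hBex with hjstar
  have hAistar : A istar ≠ 0 := by
    have := Finset.max'_mem _ hAex
    rw [← histar] at this
    exact (Finset.mem_filter.mp this).2
  have hBjstar : B jstar ≠ 0 := by
    have := Finset.max'_mem _ hBex
    rw [← hjstar] at this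
    exact (Finset.mem_filter.mp this).2
  have hAzero : ∀ i, istar < i → A i = 0 := by
    intro i hi
    by_contra h0
    have : i ≤ istar := Finset.le_max' _ i (Finset.mem_filter.mpr ⟨Finset.mem_univ i, h0⟩)
    exact absurd hi (not_lt.mpr this)
  have hBzero : ∀ j, jstar < j → B j = 0 := by
    intro j hj
    by_contra h0
    have : j ≤ jstar := Finset.le_max' _ j (Finset.mem_filter.mpr ⟨Finset.mem_univ j, h0⟩)
    exact absurd hj (not_lt.mpr this)
  -- the distinguished position
  set p : ℕ → ℤ := fun n => σ n istar + τ n jstar with hpdef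
  set E : Finset (Fin s × Fin f) :=
    Finset.univ.filter (fun ij => {n | σ n ij.1 + τ n ij.2 = p n} ∈ U) with hEdef
  have hstarE : (istar, jstar) ∈ E := by
    rw [hEdef, Finset.mem_filter]
    refine ⟨Finset.mem_univ _, ?_⟩
    have : {n | σ n istar + τ n jstar = p n} = Set.univ := by
      ext n; simp [hpdef]
    rw [this]
    exact Filter.univ_mem
  -- the good set of indices
  have hW : {n | ∀ ij : Fin s × Fin f, (σ n ij.1 + τ n ij.2 = p n ↔ ij ∈ E)} ∈ U := by
    have hall : ∀ ij : Fin s × Fin f, {n | (σ n ij.1 + τ n ij.2 = p n ↔ ij ∈ E)} ∈ U := by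
      intro ij
      by_cases hij : ij ∈ E
      · have h1 : {n | σ n ij.1 + τ n ij.2 = p n} ∈ U := by
          rw [hEdef, Finset.mem_filter] at hij
          exact hij.2
        filter_upwards [h1] with n hn
        exact iff_of_true hn hij
      · have h1 : {n | σ n ij.1 + τ n ij.2 = p n} ∉ U := by
          intro hmem
          exact hij (by rw [hEdef, Finset.mem_filter]; exact ⟨Finset.mem_univ _, hmem⟩)
        have h2 : {n | ¬(σ n ij.1 + τ n ij.2 = p n)} ∈ U := by
          rw [← Set.compl_setOf] at *
          exact (Ultrafilter.compl_mem_iff_notMem).mpr h1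
        filter_upwards [h2] with n hn
        exact iff_of_false hn hij
    have heq : {n | ∀ ij : Fin s × Fin f, (σ n ij.1 + τ n ij.2 = p n ↔ ij ∈ E)} =
        ⋂ ij : Fin s × Fin f, {n | (σ n ij.1 + τ n ij.2 = p n ↔ ij ∈ E)} := by
      ext n; simp [Set.mem_iInter]
    rw [heq]
    exact (Filter.iInter_mem).mpr hall
  -- normalized coefficient of the convolution at p n
  set q : ℕ → ℂ := fun n =>
    conv (x n) (y n) (p n) / ((l2norm (x n) * l2norm (y n) : ℝ) : ℂ) with hqdef
  have hq0 : Tendsto q ↑U (𝓝 0) := by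
    rw [tendsto_zero_iff_norm_tendsto_zero]
    apply Tendsto.mono_left ?_ hU
    apply squeeze_zero (fun n => norm_nonneg _) ?_ tendsto_one_div_add_atTop_nhds_zero_nat
    intro n
    have h1 : ‖conv (x n) (y n) (p n)‖ ≤ l2norm (conv (x n) (y n)) :=
      norm_le_l2norm (S := S' n + T' n)
        (fun k hk => conv_eq_zero (hSz' n) (hTz' n) hk) _
    have h2 : ‖q n‖ = ‖conv (x n) (y n) (p n)‖ / (l2norm (x n) * l2norm (y n)) := by
      rw [hqdef, norm_div, Complex.norm_real, Real.norm_of_nonneg (le_of_lt (hXY n))]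
    rw [h2, div_le_iff₀ (hXY n)]
    calc ‖conv (x n) (y n) (p n)‖ ≤ l2norm (conv (x n) (y n)) := h1
      _ ≤ 1 / (n + 1) * (l2norm (x n) * l2norm (y n)) := by
          have := hlt n
          rw [mul_assoc] at this
          exact le_of_lt this
  -- on the good set, q n is the sum over E
  have hqW : ∀ n ∈ {n : ℕ | ∀ ij : Fin s × Fin f, (σ n ij.1 + τ n ij.2 = p n ↔ ij ∈ E)},
      q n = ∑ ij ∈ E, a n ij.1 * b n ij.2 := by
    intro n hn
    rw [hqdef]
    simp only
    rw [conv_double_sum (hcS n) (hcT n) (hSz' n) (hTz' n) (p n), Finset.sum_div]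
    have hterm : ∀ ij : Fin s × Fin f,
        (if (σ n ij.1 : ℤ) + τ n ij.2 = p n
          then x n (σ n ij.1) * y n (τ n ij.2) else 0) /
            ((l2norm (x n) * l2norm (y n) : ℝ) : ℂ) =
        if ij ∈ E then a n ij.1 * b n ij.2 else 0 := by
      intro ij
      by_cases hc : ij ∈ E
      · rw [if_pos ((hn ij).mpr hc), if_pos hc, hadef, hbdef]
        simp only
        rw [Complex.ofReal_mul, div_mul_div_comm]
      · rw [if_neg (fun h => hc ((hn ij).mp h)), if_neg hc, zero_div]
    calc (∑ ij : Fin s × Fin f,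
            (if (σ n ij.1 : ℤ) + τ n ij.2 = p n
              then x n (σ n ij.1) * y n (τ n ij.2) else 0) /
            ((l2norm (x n) * l2norm (y n) : ℝ) : ℂ))
        = ∑ ij : Fin s × Fin f, (if ij ∈ E then a n ij.1 * b n ij.2 else 0) :=
          Finset.sum_congr rfl (fun ij _ => hterm ij)
      _ = ∑ ij ∈ E, a n ij.1 * b n ij.2 := by
          rw [Finset.sum_ite_mem, Finset.univ_inter]
  -- limit of the sum over E
  have hlim2 : Tendsto (fun n => ∑ ij ∈ E, a n ij.1 * b n ij.2) ↑U
      (𝓝 (∑ ij ∈ E, A ij.1 * B ij.2)) :=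
    tendsto_finset_sum _ (fun ij _ => (hA ij.1).mul (hB ij.2))
  have hq0' : Tendsto (fun n => ∑ ij ∈ E, a n ij.1 * b n ij.2) ↑U (𝓝 0) := by
    apply hq0.congr'
    exact Filter.eventuallyEq_of_mem hW hqW
  have hsum0 : ∑ ij ∈ E, A ij.1 * B ij.2 = 0 := tendsto_nhds_unique hlim2 hq0'
  -- other terms of the sum vanish
  have hother : ∀ ij ∈ E, ij ≠ (istar, jstar) → A ij.1 * B ij.2 = 0 := by
    rintro ⟨i, j⟩ hij hne
    have hmem : {n | σ n i + τ n j = p n} ∈ U := by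
      rw [hEdef, Finset.mem_filter] at hij
      exact hij.2
    obtain ⟨n, hn⟩ := Ultrafilter.nonempty_of_mem hmem
    rw [Set.mem_setOf_eq, hpdef] at hn
    have hn' : σ n i + τ n j = σ n istar + τ n jstar := hn
    rcases lt_trichotomy i istar with hlt' | heq | hgt
    · have h1 : τ n jstar < τ n j := by
        have := hσmono n hlt'
        omega
      have h2 : jstar < j := (hτmono n).lt_iff_lt.mp h1
      rw [hBzero j h2, mul_zero]
    · subst heq
      have h1 : τ n j = τ n jstar := by omega
      have h2 : j = jstar := (hτmono n).injective h1
      exact absurd (by rw [h2]) hne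
    · rw [hAzero i hgt, zero_mul]
  have hfinal : A istar * B jstar = 0 := by
    rw [← hsum0]
    exact (Finset.sum_eq_single_of_mem (istar, jstar) hstarE
      (fun ij hij hne => hother ij hij hne)).symm
  exact mul_ne_zero hAistar hBjstar hfinal
end

section
/- Let ỹ ∈ ℂⁿ be f-sparse with ‖ỹ‖₂ = 1 and b_k(ỹ) = Σ_j conj(ỹ_j)ỹ_{j+k} its autocorrelation. Then Σ_k |b_k(ỹ)|² ≤ f, i.e. the ℓ² norm of the autocorrelation of a unit-norm f-sparse vector is at most √f. -/
open scoped ComplexConjugate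

/-- Zero extension of a vector in `ℂⁿ` to a sequence on `ℤ`. -/
noncomputable def ext (n : ℕ) (x : Fin n → ℂ) : ℤ → ℂ :=
  fun k => ∑ i : Fin n, if ((i : ℕ) : ℤ) = k then x i else 0

/-- Autocorrelation coefficients `b_k(ỹ) = ∑_j conj(ỹ_j) ỹ_{j+k}` of `ỹ ∈ ℂⁿ`. -/
noncomputable def autocorr (n : ℕ) (y : Fin n → ℂ) (k : ℤ) : ℂ :=
  ∑' j : ℤ, conj (ext n y j) * ext n y (j + k)

/-!
On the support `S` of `ỹ` the autocorrelation is `b_k = ∑_{j ∈ S} conj(ỹ_j) ỹ_{j+k}`, so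
Cauchy–Schwarz gives `|b_k|² ≤ |S| ∑_{j ∈ S} |ỹ_j|² |ỹ_{j+k}|²`. Summing over `k`, the inner sum
`∑_k |ỹ_{j+k}|²` runs over a translate and is at most `‖ỹ‖² = 1`, leaving `|S| ‖ỹ‖² ≤ f`.
-/

open Finset

theorem norm_sum_sq_le_card_mul_sum_norm_sq {ι E : Type*} [SeminormedAddCommGroup E]
    (s : Finset ι) (z : ι → E) : ‖∑ i ∈ s, z i‖ ^ 2 ≤ #s * ∑ i ∈ s, ‖z i‖ ^ 2 := by
  grw [norm_sum_le]
  exact sq_sum_le_card_mul_sum_sq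

section Correlation

variable {𝕜 G : Type*} [RCLike 𝕜] [Add G] [IsLeftCancelAdd G]

theorem sum_norm_sq_sum_conj_mul_le {B : ℝ} (x y : G → 𝕜) (S K : Finset G)
    (hy : ∀ T : Finset G, ∑ m ∈ T, ‖y m‖ ^ 2 ≤ B) :
    ∑ k ∈ K, ‖∑ j ∈ S, conj (x j) * y (j + k)‖ ^ 2 ≤ #S * (∑ j ∈ S, ‖x j‖ ^ 2) * B := by
  calc ∑ k ∈ K, ‖∑ j ∈ S, conj (x j) * y (j + k)‖ ^ 2
      ≤ ∑ k ∈ K, #S * ∑ j ∈ S, ‖x j‖ ^ 2 * ‖y (j + k)‖ ^ 2 := by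
        gcongr with k
        simpa [mul_pow] using
          norm_sum_sq_le_card_mul_sum_norm_sq S fun j => conj (x j) * y (j + k)
    _ = #S * ∑ j ∈ S, ‖x j‖ ^ 2 * ∑ k ∈ K, ‖y (j + k)‖ ^ 2 := by
        rw [← mul_sum, sum_comm]
        simp only [mul_sum]
    _ ≤ #S * ∑ j ∈ S, ‖x j‖ ^ 2 * B := by
        gcongr with j
        simpa using hy (K.map (addLeftEmbedding j))
    _ = #S * (∑ j ∈ S, ‖x j‖ ^ 2) * B := by rw [← sum_mul, mul_assoc]

end Correlation

def Fin.intCastEmbedding (n : ℕ) : Fin n ↪ ℤ := Fin.valEmbedding.trans Nat.castEmbedding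

@[simp]
theorem Fin.intCastEmbedding_apply {n : ℕ} (i : Fin n) :
    Fin.intCastEmbedding n i = ((i : ℕ) : ℤ) :=
  rfl

section ZeroExtension

variable {n : ℕ} (x : Fin n → ℂ)

theorem ext_intCast (i : Fin n) : ext n x ((i : ℕ) : ℤ) = x i := by
  rw [_root_.ext, sum_eq_single_of_mem i (mem_univ i) fun j _ hj => if_neg ?_, if_pos rfl]
  exact_mod_cast Fin.val_injective.ne hj

theorem ext_eq_zero_of_notMem_map {S : Finset (Fin n)} (hS : ∀ i ∉ S, x i = 0) {m : ℤ}
    (hm : m ∉ S.map (Fin.intCastEmbedding n)) : ext n x m = 0 := by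
  refine sum_eq_zero fun i _ => ite_eq_right_iff.2 fun him => hS i fun hi => hm ?_
  exact mem_map.2 ⟨i, hi, him⟩

theorem sum_map_norm_sq_ext (S : Finset (Fin n)) :
    ∑ m ∈ S.map (Fin.intCastEmbedding n), ‖ext n x m‖ ^ 2 = ∑ i ∈ S, ‖x i‖ ^ 2 := by
  simp [ext_intCast]

theorem sum_norm_sq_ext_le (T : Finset ℤ) : ∑ m ∈ T, ‖ext n x m‖ ^ 2 ≤ ∑ i, ‖x i‖ ^ 2 := by
  set F := univ.map (Fin.intCastEmbedding n)
  have hF : ∀ m ∉ F, ext n x m = 0 := fun m => ext_eq_zero_of_notMem_map x (by simp)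
  calc ∑ m ∈ T, ‖ext n x m‖ ^ 2
      ≤ ∑ m ∈ T ∪ F, ‖ext n x m‖ ^ 2 :=
        sum_le_sum_of_subset_of_nonneg subset_union_left fun _ _ _ => by positivity
    _ = ∑ m ∈ F, ‖ext n x m‖ ^ 2 :=
        (sum_subset subset_union_right fun m _ hm => by simp [hF m hm]).symm
    _ = ∑ i, ‖x i‖ ^ 2 := sum_map_norm_sq_ext x univ

theorem autocorr_eq_sum {S : Finset (Fin n)} (hS : ∀ i ∉ S, x i = 0) (k : ℤ) :
    autocorr n x k =
      ∑ j ∈ S.map (Fin.intCastEmbedding n), conj (ext n x j) * ext n x (j + k) :=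
  tsum_eq_sum fun j hj => by rw [ext_eq_zero_of_notMem_map x hS hj, map_zero, zero_mul]

end ZeroExtension

/-- The ℓ² norm of the autocorrelation of a unit-norm `f`-sparse vector is at
most `√f`, i.e. `∑ₖ |bₖ(ỹ)|² ≤ f`. -/
theorem autocorr_l2_le_sparsity
    (n f : ℕ) (y : Fin n → ℂ)
    (hsparse : ∃ S : Finset (Fin n), S.card ≤ f ∧ ∀ j ∉ S, y j = 0)
    (hy : ∑ j, ‖y j‖ ^ 2 = 1) :
    (∑' k : ℤ, ‖autocorr n y k‖ ^ 2) ≤ f := by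
  obtain ⟨S, hScard, hS⟩ := hsparse
  set S' := S.map (Fin.intCastEmbedding n)
  have hext (T : Finset ℤ) : ∑ m ∈ T, ‖ext n y m‖ ^ 2 ≤ 1 := hy ▸ sum_norm_sq_ext_le y T
  refine Real.tsum_le_of_sum_le (fun _ => by positivity) fun K => ?_
  simp only [autocorr_eq_sum y hS]
  calc _ ≤ #S' * (∑ j ∈ S', ‖ext n y j‖ ^ 2) * 1 := sum_norm_sq_sum_conj_mul_le _ _ _ _ hext
    _ ≤ f * 1 * 1 := by
        gcongr
        · simpa [S'] using hScard
        · exact hext S'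
    _ = f := by ring
end

section
/- Suppose there is a constant α > 0 such that ‖u ⊛ v‖₂ ≥ α‖u‖₂‖v‖₂ for all conjugate-symmetrized zero-padded vectors u = S(x₁ − x₂), v = S(x₁ + x₂) arising from x₁, x₂ in the admissible signal class X ⊂ ℂⁿ (with S the zero-padding-and-symmetrization map into ℂ^N and ⊛ circular convolution on ℂ^N). Then for all x₁, x₂ ∈ X: ‖ |F S(x₁)|² − |F S(x₂)|² ‖₂ ≥ (α/√N)·‖S(x₁ − x₂)‖₂·‖S(x₁ + x₂)‖₂, where F is the unitary DFT on ℂ^N. -/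
open scoped ComplexConjugate

/-- Circular convolution on `ℂ^N` (indexed by `ZMod N`). -/
noncomputable def cconv (N : ℕ) [NeZero N] (x y : ZMod N → ℂ) : ZMod N → ℂ :=
  fun k => ∑ i : ZMod N, x i * y (k - i)

/-- ℓ² norm on `ℂ^N`. -/
noncomputable def l2Z (N : ℕ) [NeZero N] (z : ZMod N → ℂ) : ℝ :=
  Real.sqrt (∑ k : ZMod N, ‖z k‖ ^ 2)

/-- Unitary DFT: `(Fx)_k = N^{-1/2} ∑_l e^{i2πkl/N} x_l`. -/
noncomputable def udft (N : ℕ) [NeZero N] (x : ZMod N → ℂ) : ZMod N → ℂ :=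
  fun k => (Real.sqrt N : ℂ)⁻¹ *
    ∑ l : ZMod N, Complex.exp (Complex.I * 2 * Real.pi * ((k.val : ℂ) * (l.val : ℂ)) / N) * x l

/-!
Hermitian symmetry of `S x` makes its DFT real, so `F (S x ⊛ S x) = √N (F S x)² = √N |F S x|²`.
By the binomial identity the difference of the two intensity measurements is therefore
`N^{-1/2} F (S (x₁ - x₂) ⊛ S (x₁ + x₂))`, whose ℓ² norm is `N^{-1/2} ‖S (x₁ - x₂) ⊛ S (x₁ + x₂)‖₂`
because `F` is unitary; the RNMP bound finishes.
-/

open ZMod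

section

variable {N : ℕ} [NeZero N]

lemma dft_cconv (u v : ZMod N → ℂ) (k : ZMod N) : 𝓕 (cconv N u v) k = 𝓕 u k * 𝓕 v k := by
  rw [dft_apply, dft_apply, dft_apply, Finset.sum_mul_sum]
  simp only [cconv, smul_eq_mul, Finset.mul_sum]
  rw [Finset.sum_comm]
  refine Finset.sum_congr rfl fun i _ => Fintype.sum_equiv (Equiv.subRight i) _ _ fun l => ?_
  rw [Equiv.subRight_apply, show -(l * k) = -(i * k) + -((l - i) * k) by ring,
    AddChar.map_add_eq_mul]
  ring

lemma dft_conj_neg (Φ : ZMod N → ℂ) (k : ZMod N) :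
    𝓕 (fun j => conj (Φ (-j))) k = conj (𝓕 Φ k) := by
  simp only [dft_apply, smul_eq_mul, map_sum, map_mul]
  refine Fintype.sum_equiv (Equiv.neg _) _ _ fun j => ?_
  simp [← AddChar.map_neg_eq_conj]

lemma sum_dft (Φ : ZMod N → ℂ) : ∑ k, 𝓕 Φ k = N * Φ 0 := by
  simpa [dft_apply_zero] using congrFun (dft_dft Φ) 0

/-- Parseval, from the convolution theorem: `|𝓕 Φ|² = 𝓕 (Φ ⊛ Φ̃)` with `Φ̃ j = conj (Φ (-j))`, and by
inversion the sum of a DFT is `N` times the value at `0`. -/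
lemma sum_norm_sq_dft (Φ : ZMod N → ℂ) : ∑ k, ‖𝓕 Φ k‖ ^ 2 = N * ∑ j, ‖Φ j‖ ^ 2 := by
  suffices h : ∑ k, ((‖𝓕 Φ k‖ ^ 2 : ℝ) : ℂ) = N * ∑ j, ((‖Φ j‖ ^ 2 : ℝ) : ℂ) by
    exact_mod_cast h
  calc ∑ k, ((‖𝓕 Φ k‖ ^ 2 : ℝ) : ℂ) = ∑ k, 𝓕 (cconv N Φ (fun j => conj (Φ (-j)))) k := by
        simp [dft_cconv, dft_conj_neg, Complex.mul_conj']
    _ = N * cconv N Φ (fun j => conj (Φ (-j))) 0 := sum_dft _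
    _ = N * ∑ j, ((‖Φ j‖ ^ 2 : ℝ) : ℂ) := by simp [cconv, Complex.mul_conj']

lemma udft_eq_dft (x : ZMod N → ℂ) (k : ZMod N) : udft N x k = (√N : ℂ)⁻¹ * 𝓕 x (-k) := by
  rw [udft, dft_apply]
  congr 1
  refine Finset.sum_congr rfl fun l _ => ?_
  have h : -(l * -k) = ((k.val * l.val : ℕ) : ZMod N) := by
    push_cast [ZMod.natCast_val, ZMod.cast_id]; ring
  rw [smul_eq_mul, h, stdAddChar_apply, toCircle_natCast]
  congr 2
  push_cast; ring

lemma udft_sub (u v : ZMod N → ℂ) (k : ZMod N) :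
    udft N (u - v) k = udft N u k - udft N v k := by
  simp only [udft_eq_dft, map_sub, Pi.sub_apply, mul_sub]

lemma udft_cconv (u v : ZMod N → ℂ) (k : ZMod N) :
    udft N (cconv N u v) k = √N * (udft N u k * udft N v k) := by
  have hN : (√N : ℂ) ≠ 0 := by simp [NeZero.ne N]
  simp only [udft_eq_dft, dft_cconv]
  field_simp

lemma conj_udft_of_hermitian {x : ZMod N → ℂ} (hx : ∀ k, x k = conj (x (-k))) (k : ZMod N) :
    conj (udft N x k) = udft N x k := by
  rw [udft_eq_dft, map_mul, ← dft_conj_neg, ← funext hx, map_inv₀, Complex.conj_ofReal]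

lemma norm_sq_udft_of_hermitian {x : ZMod N → ℂ} (hx : ∀ k, x k = conj (x (-k)))
    (k : ZMod N) : ((‖udft N x k‖ ^ 2 : ℝ) : ℂ) = (√N : ℂ)⁻¹ * udft N (cconv N x x) k := by
  have hN : (√N : ℂ) ≠ 0 := by simp [NeZero.ne N]
  rw [Complex.ofReal_pow, ← Complex.mul_conj', conj_udft_of_hermitian hx, udft_cconv]
  field_simp

lemma l2Z_const_mul (c : ℂ) (z : ZMod N → ℂ) : l2Z N (fun k => c * z k) = ‖c‖ * l2Z N z := by
  simp only [l2Z, norm_mul, mul_pow, ← Finset.mul_sum, Real.sqrt_mul (sq_nonneg _),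
    Real.sqrt_sq (norm_nonneg _)]

lemma l2Z_ofReal (r : ZMod N → ℝ) : l2Z N (fun k => (r k : ℂ)) = √(∑ k, r k ^ 2) := by
  simp [l2Z, Complex.norm_real]

lemma l2Z_udft (x : ZMod N → ℂ) : l2Z N (udft N x) = l2Z N x := by
  have hN : (N : ℝ) ≠ 0 := by simp [NeZero.ne N]
  have h : ∑ k, ‖𝓕 x (-k)‖ ^ 2 = N * ∑ j, ‖x j‖ ^ 2 := by
    rw [← sum_norm_sq_dft]
    exact Equiv.sum_comp (Equiv.neg (ZMod N)) fun k => ‖𝓕 x k‖ ^ 2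
  simp only [l2Z, udft_eq_dft, norm_mul, mul_pow, ← Finset.mul_sum, h]
  rw [norm_inv, Complex.norm_real, Real.norm_of_nonneg (Real.sqrt_nonneg _), inv_pow,
    Real.sq_sqrt (Nat.cast_nonneg N)]
  field_simp

end

theorem phase_retrieval_stability_general
    (n N : ℕ) [NeZero N] (S : (Fin n → ℂ) → ZMod N → ℂ) (X : Set (Fin n → ℂ))
    (α : ℝ)
    (hsym : ∀ x : Fin n → ℂ, ∀ k, S x k = conj (S x (-k)))
    (hbin : ∀ x₁ ∈ X, ∀ x₂ ∈ X,
      (fun k => cconv N (S x₁) (S x₁) k - cconv N (S x₂) (S x₂) k)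
        = cconv N (S (x₁ - x₂)) (S (x₁ + x₂)))
    (hrnmp : ∀ x₁ ∈ X, ∀ x₂ ∈ X,
      α * l2Z N (S (x₁ - x₂)) * l2Z N (S (x₁ + x₂))
        ≤ l2Z N (cconv N (S (x₁ - x₂)) (S (x₁ + x₂)))) :
    ∀ x₁ ∈ X, ∀ x₂ ∈ X,
      (α / Real.sqrt N) * l2Z N (S (x₁ - x₂)) * l2Z N (S (x₁ + x₂))
        ≤ Real.sqrt (∑ k : ZMod N,
            (‖udft N (S x₁) k‖ ^ 2 - ‖udft N (S x₂) k‖ ^ 2) ^ 2) := by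
  intro x₁ h₁ x₂ h₂
  set w := cconv N (S (x₁ - x₂)) (S (x₁ + x₂)) with hw
  have hmeas : ∀ k, ((‖udft N (S x₁) k‖ ^ 2 - ‖udft N (S x₂) k‖ ^ 2 : ℝ) : ℂ)
      = (√N : ℂ)⁻¹ * udft N w k := fun k => by
    rw [hw, ← hbin x₁ h₁ x₂ h₂, ← Pi.sub_def, udft_sub, Complex.ofReal_sub,
      norm_sq_udft_of_hermitian (hsym x₁), norm_sq_udft_of_hermitian (hsym x₂), mul_sub]
  calc α / √N * l2Z N (S (x₁ - x₂)) * l2Z N (S (x₁ + x₂))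
      = (√N)⁻¹ * (α * l2Z N (S (x₁ - x₂)) * l2Z N (S (x₁ + x₂))) := by ring
    _ ≤ (√N)⁻¹ * l2Z N w := by gcongr; exact hrnmp x₁ h₁ x₂ h₂
    _ = l2Z N (fun k => (√N : ℂ)⁻¹ * udft N w k) := by
      rw [l2Z_const_mul, l2Z_udft, norm_inv, Complex.norm_real, Real.norm_of_nonneg (by positivity)]
    _ = _ := by rw [← funext hmeas, l2Z_ofReal]

/-- Stability of phase retrieval from symmetrized Fourier intensity
measurements: an RNMP lower bound `α` for the circular convolution of
symmetrized vectors yields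
`‖|F S(x₁)|² − |F S(x₂)|²‖₂ ≥ (α/√N)·‖S(x₁−x₂)‖₂·‖S(x₁+x₂)‖₂`. -/
theorem phase_retrieval_stability
    (n N : ℕ) [NeZero N] (S : (Fin n → ℂ) → ZMod N → ℂ) (X : Set (Fin n → ℂ))
    (α : ℝ) (hα : 0 < α)
    (hsym : ∀ x : Fin n → ℂ, ∀ k, S x k = conj (S x (-k)))
    (hbin : ∀ x₁ ∈ X, ∀ x₂ ∈ X,
      (fun k => cconv N (S x₁) (S x₁) k - cconv N (S x₂) (S x₂) k)
        = cconv N (S (x₁ - x₂)) (S (x₁ + x₂)))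
    (hrnmp : ∀ x₁ ∈ X, ∀ x₂ ∈ X,
      α * l2Z N (S (x₁ - x₂)) * l2Z N (S (x₁ + x₂))
        ≤ l2Z N (cconv N (S (x₁ - x₂)) (S (x₁ + x₂)))) :
    ∀ x₁ ∈ X, ∀ x₂ ∈ X,
      (α / Real.sqrt N) * l2Z N (S (x₁ - x₂)) * l2Z N (S (x₁ + x₂))
        ≤ Real.sqrt (∑ k : ZMod N,
            (‖udft N (S x₁) k‖ ^ 2 - ‖udft N (S x₂) k‖ ^ 2) ^ 2) :=
  phase_retrieval_stability_general n N S X α hsym hbin hrnmp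
end
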